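/- arXiv:1804.06188 — 3 statements merged into one kernel-verified Lean document; each statement's English description precedes it below -/
import Mathlib

section
/- Let α be a finite type with N elements, let k and n be integers with 1 ≤ k ≤ n ≤ N, and set t = ⌊n/k⌋. Consider the probability distribution (a PMF, built with the PMF monad from uniform distributions on finite sets) on t-tuples of size-k subsets of α obtained by the following process: (i) sample C uniformly from the size-n subsets of α; (ii) independently of each other, sample I₁, …, I_t uniformly from the size-k subsets of Fin N; (iii) sample g uniformly from the set of injective functions from the finite set ⋃_{j=1}^t I_j to C (this set is nonempty since |⋃_j I_j| ≤ t·k ≤ n); (iv) output the tuple of images (g '' I₁, …, g '' I_t). Then every tuple (S₁, …, S_t) of size-k subsets of α receives probability (Nat.choose N k)^{−t} under this distribution; equivalently, the output tuple has the same distribution as t independent uniformly random size-k subsets of α. -/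
/-!
Fix the index sets `I` and put `U = ⋃ⱼ Iⱼ`. Drawing `C` uniformly and then an injection `U → C`
uniformly gives a law on `U → α` that is supported on injections and invariant under the
permutations of `α`; as these act transitively on injections, it is the uniform law on injections,
which is also the law of `σ ∘ (↑)` for a uniform bijection `σ : Fin N ≃ α`. So the output is
`(σ '' I₁, …, σ '' I_t)` with `σ` independent of `I`, and for each fixed `σ` the map `I ↦ σ '' I`
is a bijection between tuples of `k`-subsets, so the output is uniform.
-/

open scoped ENNReal

/-- The sampling process of Lemma 1 / Lemma 5 of the paper, as a `PMF` built with the `PMF` monad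
from uniform distributions: sample a size-`n` subset `C` of `α` uniformly; independently sample
size-`k` subsets `I₁, …, I_t` of `Fin (card α)` uniformly; sample an injective function `g` from
`⋃ⱼ Iⱼ` to `C` uniformly; and output the tuple of images `(g '' I₁, …, g '' I_t)`. -/
noncomputable def sampleProc (α : Type*) [Fintype α] [DecidableEq α] (k n t : ℕ)
    (hkn : k ≤ n) (hn : n ≤ Fintype.card α) (ht : t * k ≤ n) :
    PMF (Fin t → Finset α) :=
  haveI hC : Nonempty {C : Finset α // C.card = n} := by
    obtain ⟨s, -, hs⟩ := Finset.exists_subset_card_eq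
      (show n ≤ (Finset.univ : Finset α).card by simpa using hn)
    exact ⟨⟨s, hs⟩⟩
  haveI hI : Nonempty {I : Finset (Fin (Fintype.card α)) // I.card = k} := by
    obtain ⟨s, -, hs⟩ := Finset.exists_subset_card_eq
      (show k ≤ (Finset.univ : Finset (Fin (Fintype.card α))).card by
        simpa using (hkn.trans hn))
    exact ⟨⟨s, hs⟩⟩
  (PMF.uniformOfFintype {C : Finset α // C.card = n}).bind fun C =>
    (PMF.uniformOfFintype (Fin t → {I : Finset (Fin (Fintype.card α)) // I.card = k})).bind
      fun I =>
        haveI :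
            Nonempty {g : ↥(Finset.univ.biUnion fun j => (I j).1) → α //
              Function.Injective g ∧ ∀ x, g x ∈ C.1} := by
          have hU : (Finset.univ.biUnion fun j => (I j).1).card ≤ n := by
            refine le_trans Finset.card_biUnion_le ?_
            calc ∑ j : Fin t, (I j).1.card = ∑ _j : Fin t, k := by
                  exact Finset.sum_congr rfl fun j _ => (I j).2
              _ = t * k := by simp [Finset.sum_const, mul_comm]
              _ ≤ n := ht
          have hcard :
              Fintype.card ↥(Finset.univ.biUnion fun j => (I j).1) ≤
                Fintype.card ↥C.1 := by
            rw [Fintype.card_coe, Fintype.card_coe]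
            exact hU.trans_eq C.2.symm
          obtain ⟨e⟩ := Function.Embedding.nonempty_of_card_le hcard
          exact ⟨⟨fun x => (e x).1, fun a b hab => e.injective (Subtype.ext hab),
            fun x => (e x).2⟩⟩
        (PMF.uniformOfFintype
            {g : ↥(Finset.univ.biUnion fun j => (I j).1) → α //
              Function.Injective g ∧ ∀ x, g x ∈ C.1}).map fun g i =>
          (I i).1.attach.image fun x =>
            g.1 ⟨x.1, Finset.mem_biUnion.mpr ⟨i, Finset.mem_univ i, x.2⟩⟩

open Finset Function

namespace PMF

variable {α β : Type*}

theorem map_apply_of_injective {f : α → β} (hf : Injective f) (p : PMF α) (a : α) :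
    p.map f (f a) = p a := by
  rw [map_apply, tsum_eq_single a fun a' ha' => if_neg fun h => ha' (hf h).symm, if_pos rfl]

theorem map_uniformOfFintype_equiv [Fintype α] [Fintype β] [Nonempty α] [Nonempty β]
    (e : α ≃ β) : (uniformOfFintype α).map e = uniformOfFintype β := by
  ext b
  rw [← e.apply_symm_apply b, map_apply_of_injective e.injective, uniformOfFintype_apply,
    uniformOfFintype_apply, Fintype.card_congr e]

theorem bind_map_comm {γ : Type*} (p : PMF α) (q : PMF β) (f : α → β → γ) :
    (p.bind fun a => q.map (f a)) = q.bind fun b => p.map fun a => f a b := by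
  simp only [← bind_pure_comp, Function.comp_def]
  exact bind_comm p q _

end PMF

open PMF

section UniformEmbedding

variable {γ α : Type*} [Fintype γ] [Fintype α] [DecidableEq α]

theorem eq_map_uniformOfFintype_embedding_of_perm_invariant [Nonempty (γ ↪ α)]
    (p : PMF (γ → α)) (hinj : ∀ f ∈ p.support, Injective f)
    (hinv : ∀ π : Equiv.Perm α, p.map (π ∘ ·) = p) :
    p = (uniformOfFintype (γ ↪ α)).map (⇑) := by
  have hconst (e e' : γ ↪ α) : p e = p e' := by
    obtain ⟨π, hπ⟩ := Equiv.Perm.exists_extending_pair e e' e.injective e'.injective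
    have he' : ⇑e' = π ∘ e := funext fun x => (hπ x).symm
    rw [he', ← map_apply_of_injective π.injective.comp_left, hinv]
  have hsum : ∑ e : γ ↪ α, p e = 1 := by
    rw [← tsum_fintype (L := .unconditional _), DFunLike.coe_injective.tsum_eq, tsum_coe]
    intro f hf
    exact ⟨⟨f, hinj f hf⟩, rfl⟩
  ext f
  by_cases hf : Injective f
  · obtain ⟨e, rfl⟩ : ∃ e : γ ↪ α, ⇑e = f := ⟨⟨f, hf⟩, rfl⟩
    rw [map_apply_of_injective DFunLike.coe_injective, uniformOfFintype_apply]
    simp only [hconst _ e, sum_const, card_univ, nsmul_eq_mul] at hsum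
    exact ENNReal.eq_inv_of_mul_eq_one_left (by rwa [mul_comm])
  · rw [apply_eq_zero_iff _ _ |>.mpr fun h => hf (hinj f h), eq_comm, apply_eq_zero_iff,
      support_map]
    rintro ⟨e, -, rfl⟩
    exact hf e.injective

theorem map_uniformOfFintype_equiv_comp {β : Type*} [Fintype β] [DecidableEq β]
    [Nonempty (β ≃ α)] [Nonempty (γ ↪ α)] {ι : γ → β} (hι : Injective ι) :
    (uniformOfFintype (β ≃ α)).map (fun σ : β ≃ α => ⇑σ ∘ ι) =
      (uniformOfFintype (γ ↪ α)).map (⇑) := by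
  refine eq_map_uniformOfFintype_embedding_of_perm_invariant _ ?_ fun π => ?_
  · rw [support_map]
    rintro _ ⟨σ, -, rfl⟩
    exact σ.injective.comp hι
  · conv_rhs => rw [← map_uniformOfFintype_equiv ((Equiv.refl β).equivCongr π), map_comp]
    rw [map_comp]
    rfl

theorem bind_uniformOfFintype_injective_mapsTo [DecidableEq γ] {n : ℕ}
    [Nonempty {C : Finset α // C.card = n}]
    [∀ C : {C : Finset α // C.card = n},
      Nonempty {g : γ → α // Injective g ∧ ∀ x, g x ∈ C.1}] [Nonempty (γ ↪ α)] :
    (uniformOfFintype {C : Finset α // C.card = n}).bind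
        (fun C => (uniformOfFintype {g : γ → α // Injective g ∧ ∀ x, g x ∈ C.1}).map Subtype.val) =
      (uniformOfFintype (γ ↪ α)).map (⇑) := by
  refine eq_map_uniformOfFintype_embedding_of_perm_invariant _ ?_ fun π => ?_
  · intro f hf
    obtain ⟨C, -, hf⟩ := (mem_support_bind_iff _ _ _).mp hf
    rw [support_map] at hf
    obtain ⟨g, -, rfl⟩ := hf
    exact g.2.1
  · let πC : {C : Finset α // C.card = n} ≃ {C : Finset α // C.card = n} :=
      (Equiv.finsetCongr π).subtypeEquiv fun C => by simp
    let πg (C : {C : Finset α // C.card = n}) :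
        {g : γ → α // Injective g ∧ ∀ x, g x ∈ C.1} ≃
          {g : γ → α // Injective g ∧ ∀ x, g x ∈ (πC C).1} :=
      (Equiv.piCongrRight fun _ => π).subtypeEquiv fun g =>
        and_congr (π.comp_injective g).symm (by simp [πC, Equiv.finsetCongr])
    have hπg (C) : (uniformOfFintype {g : γ → α // Injective g ∧ ∀ x, g x ∈ C.1}).map
        ((π ∘ ·) ∘ Subtype.val) =
          (uniformOfFintype {g : γ → α // Injective g ∧ ∀ x, g x ∈ (πC C).1}).map Subtype.val := by
      rw [← map_uniformOfFintype_equiv (πg C), map_comp]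
      rfl
    simp_rw [PMF.map_bind, map_comp, hπg]
    conv_rhs => rw [← map_uniformOfFintype_equiv πC, PMF.bind_map]
    rfl

end UniformEmbedding

theorem Finset.nonempty_subtype_card_eq {α : Type*} [Fintype α] {n : ℕ}
    (hn : n ≤ Fintype.card α) : Nonempty {C : Finset α // C.card = n} :=
  let ⟨C, hC⟩ := (powersetCard_nonempty (s := (univ : Finset α))).2 (by rwa [card_univ])
  ⟨⟨C, (mem_powersetCard.1 hC).2⟩⟩

theorem nonempty_injective_mapsTo {γ α : Type*} [Fintype γ] {C : Finset α}
    (h : Fintype.card γ ≤ C.card) : Nonempty {g : γ → α // Injective g ∧ ∀ x, g x ∈ C} :=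
  let ⟨e⟩ := Function.Embedding.nonempty_of_card_le (β := C) (by simpa using h)
  ⟨⟨fun x => e x, Subtype.val_injective.comp e.injective, fun x => (e x).2⟩⟩

section Image

variable {ι β α : Type*} [Fintype β] [DecidableEq β] [Fintype α] [DecidableEq α]

theorem bind_uniformOfFintype_injective_mapsTo_map_image [Fintype ι] [Nonempty (β ≃ α)]
    (I : ι → Finset β) {n : ℕ} [Nonempty {C : Finset α // C.card = n}]
    [∀ C : {C : Finset α // C.card = n},
      Nonempty {g : ↥(univ.biUnion I) → α // Injective g ∧ ∀ x, g x ∈ C.1}] :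
    (uniformOfFintype {C : Finset α // C.card = n}).bind (fun C =>
      (uniformOfFintype {g : ↥(univ.biUnion I) → α // Injective g ∧ ∀ x, g x ∈ C.1}).map
        fun g i => (I i).attach.image fun x => g.1 ⟨x.1, mem_biUnion.mpr ⟨i, mem_univ i, x.2⟩⟩) =
      (uniformOfFintype (β ≃ α)).map fun (σ : β ≃ α) i => (I i).image σ := by
  obtain ⟨σ₀⟩ := ‹Nonempty (β ≃ α)›
  have : Nonempty (↥(univ.biUnion I) ↪ α) :=
    ⟨⟨σ₀ ∘ Subtype.val, σ₀.injective.comp Subtype.val_injective⟩⟩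
  let out (g : ↥(univ.biUnion I) → α) (i : ι) : Finset α :=
    (I i).attach.image fun x => g ⟨x.1, mem_biUnion.mpr ⟨i, mem_univ i, x.2⟩⟩
  have himage :
      (fun (σ : β ≃ α) i => (I i).image σ) = out ∘ fun σ : β ≃ α => ⇑σ ∘ Subtype.val := by
    funext σ i
    conv_lhs => rw [← attach_image_val (s := I i), image_image]
    rfl
  rw [himage, ← map_comp, map_uniformOfFintype_equiv_comp Subtype.val_injective,
    ← bind_uniformOfFintype_injective_mapsTo (n := n), PMF.map_bind]
  simp_rw [map_comp]
  rfl

theorem map_uniformOfFintype_image_equiv [Fintype ι] [DecidableEq ι] {k : ℕ}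
    [Nonempty {I : Finset β // I.card = k}] [Nonempty {S : Finset α // S.card = k}]
    (σ : β ≃ α) :
    (uniformOfFintype (ι → {I : Finset β // I.card = k})).map (fun I i => (I i).1.image σ) =
      (uniformOfFintype (ι → {S : Finset α // S.card = k})).map fun S i => (S i).1 := by
  let E : (ι → {I : Finset β // I.card = k}) ≃ (ι → {S : Finset α // S.card = k}) :=
    Equiv.piCongrRight fun _ => σ.finsetCongr.subtypeEquiv fun I => by simp
  rw [← map_uniformOfFintype_equiv E, map_comp]
  congr
  funext I i
  simp [E, Equiv.finsetCongr, map_eq_image]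

end Image

theorem stmt4_general {α : Type*} [Fintype α] [DecidableEq α] (N k n : ℕ)
    (hN : Fintype.card α = N) (hkn : k ≤ n) (hn : n ≤ Fintype.card α)
    (S : Fin (n / k) → Finset α) (hS : ∀ i, (S i).card = k) :
    sampleProc α k n (n / k) hkn hn (Nat.div_mul_le_self n k) S =
      ((N.choose k : ℝ≥0∞) ^ (n / k))⁻¹ := by
  have : Nonempty {C : Finset α // C.card = n} := nonempty_subtype_card_eq hn
  have : Nonempty {S : Finset α // S.card = k} := nonempty_subtype_card_eq (hkn.trans hn)
  have : Nonempty {I : Finset (Fin (Fintype.card α)) // I.card = k} :=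
    nonempty_subtype_card_eq (by simpa using hkn.trans hn)
  have : Nonempty (Fin (Fintype.card α) ≃ α) := ⟨(Fintype.equivFin α).symm⟩
  have (I : Fin (n / k) → {I : Finset (Fin (Fintype.card α)) // I.card = k})
      (C : {C : Finset α // C.card = n}) :
      Nonempty {g : ↥(univ.biUnion fun j => (I j).1) → α // Injective g ∧ ∀ x, g x ∈ C.1} :=
    nonempty_injective_mapsTo <| by
      rw [Fintype.card_coe, C.2]
      exact (card_biUnion_le_card_mul _ _ k fun j _ => (I j).2.le).trans
        (by simpa using Nat.div_mul_le_self n k)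
  rw [sampleProc, bind_comm]
  simp_rw [bind_uniformOfFintype_injective_mapsTo_map_image]
  rw [bind_map_comm]
  simp_rw [map_uniformOfFintype_image_equiv, bind_const]
  obtain ⟨S', rfl⟩ : ∃ S' : Fin (n / k) → {S : Finset α // S.card = k}, (fun i => (S' i).1) = S :=
    ⟨fun i => ⟨S i, hS i⟩, rfl⟩
  have hval : Injective fun (S : Fin (n / k) → {S : Finset α // S.card = k}) i => (S i).1 :=
    Subtype.val_injective.comp_left
  rw [map_apply_of_injective hval, uniformOfFintype_apply,
    Fintype.card_fun, Fintype.card_finset_len, Fintype.card_fin, hN, Nat.cast_pow]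

/-- Lemma 1 / Lemma 5 of the paper: under the above sampling process with `t = ⌊n/k⌋`, every tuple
`(S₁, …, S_t)` of size-`k` subsets of `α` receives probability `(N choose k)⁻ᵗ`; i.e. the output
tuple is distributed as `t` independent uniformly random size-`k` subsets of `α`. -/
theorem stmt4 {α : Type*} [Fintype α] [DecidableEq α] (N k n : ℕ)
    (hN : Fintype.card α = N) (hk : 1 ≤ k) (hkn : k ≤ n) (hn : n ≤ Fintype.card α)
    (S : Fin (n / k) → Finset α) (hS : ∀ i, (S i).card = k) :
    sampleProc α k n (n / k) hkn hn (Nat.div_mul_le_self n k) S =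
      ((N.choose k : ℝ≥0∞) ^ (n / k))⁻¹ :=
  stmt4_general N k n hN hkn hn S hS
end

section
/- Let α be a finite type with N elements and let k ≤ N. Let H be a nonempty class of {0,1}-valued hypotheses f : Finset α → ℝ whose VC dimension (with respect to size-k subsets of α) equals d, with d ≥ 1. Let S₁, …, S_m be independent uniformly random size-k subsets of α, with m ≥ d. Then for every ε > 0: P[ sup_{f ∈ H} | Q_k(Finset.univ, f) − (1/m) · ∑_{i=1}^m f(S_i) | ≥ ε ] ≤ 4 · (2 e m / d)^d · exp(− m ε² / 8). -/
open scoped ENNReal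

set_option maxHeartbeats 1600000

section Helpers


lemma sum01 {ι : Type*} [DecidableEq ι] (s : Finset ι) (v : ι → ℝ)
    (h : ∀ i ∈ s, v i = 0 ∨ v i = 1) :
    ∑ i ∈ s, v i = ({i ∈ s | v i = 1} : Finset ι).card := by
  classical
  rw [← Finset.sum_filter_add_sum_filter_not s (fun i => v i = 1)]
  have h2 : ∑ i ∈ s.filter (fun i => ¬ v i = 1), v i = 0 :=
    Finset.sum_eq_zero fun i hi => by
      rcases Finset.mem_filter.1 hi with ⟨hi1, hi2⟩
      rcases h i hi1 with h0 | h1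
      · exact h0
      · exact absurd h1 hi2
  have h1 : ∑ i ∈ s.filter (fun i => v i = 1), v i
      = (s.filter (fun i => v i = 1)).card := by
    rw [Finset.sum_congr rfl (fun i hi => (Finset.mem_filter.1 hi).2), Finset.sum_const,
      nsmul_eq_mul, mul_one]
  rw [h1, h2, add_zero]

lemma sum_choose_le_pow (d n : ℕ) (hd : 1 ≤ d) (hdn : d ≤ n) :
    (∑ i ∈ Finset.range (d + 1), (n.choose i : ℝ)) ≤ (Real.exp 1 * n / d) ^ d := by
  have hn : 0 < (n : ℝ) := by exact_mod_cast hd.trans hdn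
  have hd' : 0 < (d : ℝ) := by positivity
  set x : ℝ := d / n with hx
  have hx0 : 0 < x := by positivity
  have hx1 : x ≤ 1 := by
    rw [hx, div_le_one hn]; exact_mod_cast hdn
  have key : (∑ i ∈ Finset.range (d + 1), (n.choose i : ℝ)) * x ^ d ≤ Real.exp 1 ^ d := by
    have h1 : (∑ i ∈ Finset.range (d + 1), (n.choose i : ℝ)) * x ^ d
        = ∑ i ∈ Finset.range (d + 1), (n.choose i : ℝ) * x ^ d := by
      rw [Finset.sum_mul]
    have h2 : ∀ i ∈ Finset.range (d + 1),
        (n.choose i : ℝ) * x ^ d ≤ x ^ i * (n.choose i : ℝ) := fun i hi => by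
      rw [mul_comm]
      have : x ^ d ≤ x ^ i :=
        pow_le_pow_of_le_one hx0.le hx1 (Nat.lt_succ_iff.1 (Finset.mem_range.1 hi))
      have hc : (0:ℝ) ≤ (n.choose i : ℝ) := by positivity
      nlinarith
    have h3 : ∑ i ∈ Finset.range (d + 1), x ^ i * (n.choose i : ℝ)
        ≤ ∑ i ∈ Finset.range (n + 1), x ^ i * (n.choose i : ℝ) := by
      apply Finset.sum_le_sum_of_subset_of_nonneg
      · exact Finset.range_subset_range.2 (by omega)
      · intro i _ _; positivity
    have h4 : ∑ i ∈ Finset.range (n + 1), x ^ i * (n.choose i : ℝ) = (x + 1) ^ n := by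
      rw [add_pow]; apply Finset.sum_congr rfl; intro i _; ring
    have h5 : (x + 1) ^ n ≤ Real.exp 1 ^ d := by
      have : (x + 1) ^ n ≤ Real.exp x ^ n := by
        apply pow_le_pow_left₀ (by positivity) (by linarith [Real.add_one_le_exp x])
      refine this.trans ?_
      rw [← Real.exp_nat_mul, ← Real.exp_nat_mul]
      apply Real.exp_le_exp.2
      rw [hx]
      rw [mul_div_cancel₀]
      · simp
      · exact hn.ne'
    calc (∑ i ∈ Finset.range (d + 1), (n.choose i : ℝ)) * x ^ d
        ≤ ∑ i ∈ Finset.range (d + 1), x ^ i * (n.choose i : ℝ) := by rw [h1]; exact Finset.sum_le_sum h2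
      _ ≤ (x + 1) ^ n := h3.trans_eq h4
      _ ≤ Real.exp 1 ^ d := h5
  have hxd : 0 < x ^ d := by positivity
  rw [← le_div_iff₀ hxd] at key
  refine key.trans_eq ?_
  rw [div_eq_iff hxd.ne', ← mul_pow]
  congr 1
  rw [hx]
  field_simp


/-- one-sided Chernoff count for sign vectors -/
lemma count_signs_one_side (m : ℕ) (hm : 1 ≤ m) (a : Fin m → ℝ) (ha : ∀ i, |a i| ≤ 1)
    (t : ℝ) (ht : 0 ≤ t) :
    ((Finset.univ.filter
        (fun σ : Fin m → Bool => t ≤ ∑ i, (if σ i then (-1:ℝ) else 1) * a i)).card : ℝ)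
      ≤ 2 ^ m * Real.exp (-t ^ 2 / (2 * m)) := by
  classical
  have hm' : 0 < (m : ℝ) := by exact_mod_cast hm
  set lam : ℝ := t / m with hlam
  have hlam0 : 0 ≤ lam := by positivity
  set S : (Fin m → Bool) → ℝ := fun σ => ∑ i, (if σ i then (-1:ℝ) else 1) * a i with hS
  have step1 : ((Finset.univ.filter (fun σ => t ≤ S σ)).card : ℝ)
      ≤ ∑ σ : Fin m → Bool, Real.exp (lam * (S σ - t)) := by
    have e0 : ((Finset.univ.filter (fun σ => t ≤ S σ)).card : ℝ)
        = ∑ σ ∈ Finset.univ.filter (fun σ => t ≤ S σ), (1:ℝ) := by simp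
    rw [e0]
    calc ∑ σ ∈ Finset.univ.filter (fun σ => t ≤ S σ), (1:ℝ)
        ≤ ∑ σ ∈ Finset.univ.filter (fun σ => t ≤ S σ), Real.exp (lam * (S σ - t)) := by
          apply Finset.sum_le_sum
          intro σ hσ
          have h := (Finset.mem_filter.1 hσ).2
          have h2 : 0 ≤ lam * (S σ - t) := mul_nonneg hlam0 (by linarith)
          calc (1:ℝ) = Real.exp 0 := by simp
            _ ≤ _ := Real.exp_le_exp.2 h2
      _ ≤ ∑ σ : Fin m → Bool, Real.exp (lam * (S σ - t)) := by
          apply Finset.sum_le_sum_of_subset_of_nonneg (Finset.filter_subset _ _)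
          intro σ _ _
          exact (Real.exp_pos _).le
  have step2 : ∑ σ : Fin m → Bool, Real.exp (lam * S σ)
      = ∏ i : Fin m, (Real.exp (-(lam * a i)) + Real.exp (lam * a i)) := by
    have : ∀ σ : Fin m → Bool, Real.exp (lam * S σ)
        = ∏ i : Fin m, Real.exp (lam * ((if σ i then (-1:ℝ) else 1) * a i)) := by
      intro σ
      rw [← Real.exp_sum, hS, Finset.mul_sum]
    simp_rw [this]
    rw [← Fintype.piFinset_univ]
    refine (Finset.sum_prod_piFinset (Finset.univ : Finset Bool)
      (fun i b => Real.exp (lam * ((if b then (-1:ℝ) else 1) * a i)))).trans ?_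
    apply Finset.prod_congr rfl
    intro i _
    rw [Fintype.sum_bool]
    norm_num
  have step3 : ∏ i : Fin m, (Real.exp (-(lam * a i)) + Real.exp (lam * a i))
      ≤ 2 ^ m * Real.exp (lam ^ 2 * m / 2) := by
    have hterm : ∀ i : Fin m, Real.exp (-(lam * a i)) + Real.exp (lam * a i)
        ≤ 2 * Real.exp (lam ^ 2 / 2) := by
      intro i
      have h1 : Real.exp (-(lam * a i)) + Real.exp (lam * a i) = 2 * Real.cosh (lam * a i) := by
        rw [Real.cosh_eq]; ring
      rw [h1]
      have h2 : Real.cosh (lam * a i) ≤ Real.exp ((lam * a i) ^ 2 / 2) :=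
        Real.cosh_le_exp_half_sq _
      have h3 : (lam * a i) ^ 2 ≤ lam ^ 2 := by
        have := ha i
        have h4 : a i ^ 2 ≤ 1 := by nlinarith [abs_nonneg (a i), sq_abs (a i)]
        nlinarith [sq_nonneg lam]
      have h5 : Real.exp ((lam * a i) ^ 2 / 2) ≤ Real.exp (lam ^ 2 / 2) :=
        Real.exp_le_exp.2 (by linarith)
      linarith
    calc ∏ i : Fin m, (Real.exp (-(lam * a i)) + Real.exp (lam * a i))
        ≤ ∏ _i : Fin m, (2 * Real.exp (lam ^ 2 / 2)) := by
          apply Finset.prod_le_prod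
          · intro i _; positivity
          · intro i _; exact hterm i
      _ = 2 ^ m * Real.exp (lam ^ 2 / 2) ^ m := by
          rw [Finset.prod_const, Finset.card_univ, Fintype.card_fin, mul_pow]
      _ = 2 ^ m * Real.exp (lam ^ 2 * m / 2) := by
          rw [← Real.exp_nat_mul]; ring_nf
  have final : ∑ σ : Fin m → Bool, Real.exp (lam * (S σ - t))
      ≤ 2 ^ m * Real.exp (-t ^ 2 / (2 * m)) := by
    have : ∀ σ, Real.exp (lam * (S σ - t)) = Real.exp (lam * S σ) * Real.exp (-(lam * t)) := by
      intro σ; rw [← Real.exp_add]; ring_nf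
    simp_rw [this]
    rw [← Finset.sum_mul, step2]
    have hpos : 0 ≤ Real.exp (-(lam * t)) := (Real.exp_pos _).le
    calc (∏ i : Fin m, (Real.exp (-(lam * a i)) + Real.exp (lam * a i))) * Real.exp (-(lam * t))
        ≤ (2 ^ m * Real.exp (lam ^ 2 * m / 2)) * Real.exp (-(lam * t)) := by
          apply mul_le_mul_of_nonneg_right step3 hpos
      _ = 2 ^ m * Real.exp (lam ^ 2 * m / 2 + -(lam * t)) := by
          rw [mul_assoc, Real.exp_add]
      _ = 2 ^ m * Real.exp (-t ^ 2 / (2 * m)) := by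
          congr 1
          congr 1
          rw [hlam]
          field_simp
          ring
  exact step1.trans final

lemma count_signs (m : ℕ) (hm : 1 ≤ m) (a : Fin m → ℝ) (ha : ∀ i, |a i| ≤ 1)
    (t : ℝ) (ht : 0 ≤ t) :
    ((Finset.univ.filter
        (fun σ : Fin m → Bool => t ≤ |∑ i, (if σ i then (-1:ℝ) else 1) * a i|)).card : ℝ)
      ≤ 2 ^ m * (2 * Real.exp (-t ^ 2 / (2 * m))) := by
  classical
  have hsub : (Finset.univ.filter
      (fun σ : Fin m → Bool => t ≤ |∑ i, (if σ i then (-1:ℝ) else 1) * a i|))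
      ⊆ (Finset.univ.filter
          (fun σ : Fin m → Bool => t ≤ ∑ i, (if σ i then (-1:ℝ) else 1) * a i))
        ∪ (Finset.univ.filter
          (fun σ : Fin m → Bool => t ≤ ∑ i, (if σ i then (-1:ℝ) else 1) * (-(a i)))) := by
    intro σ hσ
    have h := (Finset.mem_filter.1 hσ).2
    rcases le_abs.1 h with h1 | h1
    · exact Finset.mem_union_left _ (Finset.mem_filter.2 ⟨Finset.mem_univ _, h1⟩)
    · refine Finset.mem_union_right _ (Finset.mem_filter.2 ⟨Finset.mem_univ _, ?_⟩)
      calc t ≤ -∑ i, (if σ i then (-1:ℝ) else 1) * a i := h1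
        _ = ∑ i, (if σ i then (-1:ℝ) else 1) * (-(a i)) := by
            rw [← Finset.sum_neg_distrib]; apply Finset.sum_congr rfl; intro i _; ring
  have h1 := count_signs_one_side m hm a ha t ht
  have h2 := count_signs_one_side m hm (fun i => -(a i)) (fun i => by simpa using ha i) t ht
  have hcard := Finset.card_le_card hsub
  have hcard2 := Finset.card_union_le
    (Finset.univ.filter (fun σ : Fin m → Bool => t ≤ ∑ i, (if σ i then (-1:ℝ) else 1) * a i))
    (Finset.univ.filter (fun σ : Fin m → Bool => t ≤ ∑ i, (if σ i then (-1:ℝ) else 1) * (-(a i))))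
  have : ((Finset.univ.filter
      (fun σ : Fin m → Bool => t ≤ |∑ i, (if σ i then (-1:ℝ) else 1) * a i|)).card : ℝ)
      ≤ (2 ^ m * Real.exp (-t ^ 2 / (2 * m))) + (2 ^ m * Real.exp (-t ^ 2 / (2 * m))) := by
    calc ((Finset.univ.filter
        (fun σ : Fin m → Bool => t ≤ |∑ i, (if σ i then (-1:ℝ) else 1) * a i|)).card : ℝ)
        ≤ _ := by exact_mod_cast hcard.trans hcard2
      _ ≤ _ := add_le_add h1 h2
  linarith



lemma sum_pi_prod_point {K : Type*} [Fintype K] [DecidableEq K] (m : ℕ)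
    (h : Fin m → K → ℝ) :
    ∑ ω : Fin m → K, ∏ l, h l (ω l) = ∏ l, ∑ y : K, h l y := by
  rw [← Fintype.piFinset_univ]
  exact (Finset.sum_prod_piFinset (Finset.univ : Finset K) h).trans rfl

lemma sum_pi_sq {K : Type*} [Fintype K] [DecidableEq K] (m : ℕ) (g : K → ℝ)
    (hg : ∑ s : K, g s = 0) :
    ∑ ω : Fin m → K, (∑ i, g (ω i)) ^ 2
      = (Fintype.card K : ℝ) ^ (m - 1) * m * ∑ s : K, (g s) ^ 2 := by
  classical
  rcases Nat.eq_zero_or_pos m with hm | hm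
  · subst hm; simp
  have expand : ∀ ω : Fin m → K, (∑ i, g (ω i)) ^ 2 = ∑ i, ∑ j, g (ω i) * g (ω j) := by
    intro ω; rw [sq, Finset.sum_mul_sum]
  simp_rw [expand]
  rw [Finset.sum_comm]
  have swap2 : ∀ i : Fin m, ∑ ω : Fin m → K, ∑ j, g (ω i) * g (ω j)
      = ∑ j, ∑ ω : Fin m → K, g (ω i) * g (ω j) := fun i => Finset.sum_comm
  simp_rw [swap2]
  have offdiag : ∀ i j : Fin m, i ≠ j → ∑ ω : Fin m → K, g (ω i) * g (ω j) = 0 := by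
    intro i j hij
    have hpt : ∀ ω : Fin m → K, g (ω i) * g (ω j)
        = ∏ l, (fun l y => if l = i then g y else if l = j then g y else 1) l (ω l) := by
      intro ω
      rw [← Finset.mul_prod_erase Finset.univ _ (Finset.mem_univ i)]
      rw [← Finset.mul_prod_erase _ _ (Finset.mem_erase.2 ⟨hij.symm, Finset.mem_univ j⟩)]
      rw [Finset.prod_eq_one (fun l hl => by
        rcases Finset.mem_erase.1 hl with ⟨hlj, hl2⟩
        rcases Finset.mem_erase.1 hl2 with ⟨hli, -⟩
        simp [hli, hlj])]
      simp [hij.symm, hij]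
    calc ∑ ω : Fin m → K, g (ω i) * g (ω j)
        = ∑ ω : Fin m → K,
            ∏ l, (fun l y => if l = i then g y else if l = j then g y else 1) l (ω l) :=
          Finset.sum_congr rfl (fun ω _ => hpt ω)
      _ = ∏ l, ∑ y : K, (fun l y => if l = i then g y else if l = j then g y else 1) l y :=
          sum_pi_prod_point (K := K) m (fun l y => if l = i then g y else if l = j then g y else 1)
      _ = 0 := by
          apply Finset.prod_eq_zero (Finset.mem_univ i)
          simpa using hg
  have diag : ∀ i : Fin m, ∑ ω : Fin m → K, g (ω i) * g (ω i)
      = (Fintype.card K : ℝ) ^ (m - 1) * ∑ s : K, (g s) ^ 2 := by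
    intro i
    have hpt : ∀ ω : Fin m → K, g (ω i) * g (ω i)
        = ∏ l, (fun l y => if l = i then g y * g y else 1) l (ω l) := by
      intro ω
      rw [← Finset.mul_prod_erase Finset.univ _ (Finset.mem_univ i)]
      rw [Finset.prod_eq_one (fun l hl => by
        rcases Finset.mem_erase.1 hl with ⟨hli, -⟩
        simp [hli])]
      simp
    rw [Finset.sum_congr rfl (fun ω _ => hpt ω),
      sum_pi_prod_point m (fun l y => if l = i then g y * g y else 1)]
    rw [← Finset.mul_prod_erase Finset.univ _ (Finset.mem_univ i)]
    have h1 : ∀ l ∈ Finset.univ.erase i,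
        (∑ y : K, (fun l y => if l = i then g y * g y else 1) l y) = (Fintype.card K : ℝ) := by
      intro l hl
      rcases Finset.mem_erase.1 hl with ⟨hli, -⟩
      simp [hli]
    rw [Finset.prod_congr rfl h1, Finset.prod_const, Finset.card_erase_of_mem (Finset.mem_univ i),
      Finset.card_univ, Fintype.card_fin]
    simp only [if_pos rfl]
    rw [mul_comm]
    congr 1
    apply Finset.sum_congr rfl
    intro s _
    simp [sq]
  have split : ∀ i : Fin m, ∑ j, ∑ ω : Fin m → K, g (ω i) * g (ω j)
      = (Fintype.card K : ℝ) ^ (m - 1) * ∑ s : K, (g s) ^ 2 := by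
    intro i
    rw [← Finset.add_sum_erase _ _ (Finset.mem_univ i), diag i,
      Finset.sum_eq_zero (fun j hj => offdiag i j (Finset.mem_erase.1 hj).1.symm), add_zero]
  rw [Finset.sum_congr rfl (fun i _ => split i), Finset.sum_const, Finset.card_univ,
    Fintype.card_fin, nsmul_eq_mul]
  ring

end Helpers


lemma cardFilterReal {β : Type*} [Fintype β] (P : β → Prop) [DecidablePred P] :
    (((Finset.univ.filter P).card : ℕ) : ℝ) = ∑ b : β, if P b then (1:ℝ) else 0 := by
  rw [Finset.card_filter]
  push_cast
  apply Finset.sum_congr rfl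
  intro b _
  split_ifs <;> simp

lemma filter_swap_sum {ι γ : Type*} [Fintype ι] [Fintype γ] (P : ι → γ → Prop)
    [∀ i x, Decidable (P i x)] :
    ∑ i : ι, ((Finset.univ.filter (P i)).card : ℝ)
      = ∑ x : γ, ((Finset.univ.filter (fun i => P i x)).card : ℝ) := by
  have h1 : ∀ i, ((Finset.univ.filter (P i)).card : ℝ)
      = ∑ x : γ, if P i x then (1:ℝ) else 0 := fun i => cardFilterReal _
  have h2 : ∀ x : γ, ((Finset.univ.filter (fun i => P i x)).card : ℝ)
      = ∑ i : ι, if P i x then (1:ℝ) else 0 := fun x => cardFilterReal _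
  rw [Finset.sum_congr rfl (fun i _ => h1 i), Finset.sum_congr rfl (fun x _ => h2 x)]
  exact Finset.sum_comm



/-- The average of `f` over all size-`k` subsets of `C`: the probability `Q_{Υ,k}(f)` that a
uniformly random size-`k` fragment of the relational example with domain `C` satisfies `f`. -/
noncomputable def Qk {α : Type*} [DecidableEq α] (k : ℕ) (C : Finset α) (f : Finset α → ℝ) : ℝ :=
  ((C.card.choose k : ℝ))⁻¹ * ∑ S ∈ C.powersetCard k, f S

/-- `H` shatters the collection `X` of size-`k` subsets of `α`: every `S ∈ X` has cardinality `k`,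
and for every `Y ⊆ X` there is `f ∈ H` taking value `1` on `Y` and `0` on `X \ Y`. -/
def Shatters {α : Type*} [DecidableEq α] (k : ℕ)
    (H : Set (Finset α → ℝ)) (X : Finset (Finset α)) : Prop :=
  (∀ S ∈ X, S.card = k) ∧
    ∀ Y ⊆ X, ∃ f ∈ H, (∀ S ∈ Y, f S = 1) ∧ ∀ S ∈ X \ Y, f S = 0

/-- The VC dimension of `H` with respect to size-`k` subsets of `α` equals `d`: `d` is the largest
cardinality of a collection of size-`k` subsets shattered by `H`. -/
def VCDimEq {α : Type*} [DecidableEq α] (k : ℕ) (H : Set (Finset α → ℝ)) (d : ℕ) : Prop :=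
  IsGreatest {m : ℕ | ∃ X : Finset (Finset α), Shatters k H X ∧ X.card = m} d

/-- `m` independent uniformly random size-`k` subsets of `α`: the uniform distribution on
`m`-tuples of size-`k` subsets, i.e. the `m`-fold product of the uniform measure on size-`k`
subsets of `α`. -/
noncomputable def uniformKTuples (α : Type*) [Fintype α] [DecidableEq α] (k m : ℕ)
    (hk : k ≤ Fintype.card α) : PMF (Fin m → {S : Finset α // S.card = k}) :=
  haveI : Nonempty {S : Finset α // S.card = k} := by
    obtain ⟨s, -, hs⟩ := Finset.exists_subset_card_eq
      (show k ≤ (Finset.univ : Finset α).card by simpa using hk)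
    exact ⟨⟨s, hs⟩⟩
  PMF.uniformOfFintype (Fin m → {S : Finset α // S.card = k})

/-- Classical VC tail inequality (Lemma 3 of the paper, first part): for a nonempty class `H` of
`{0,1}`-valued hypotheses with VC dimension `d ≥ 1` and `S₁, …, S_m` independent uniformly random
size-`k` subsets of `α` (`m ≥ d`),
`P[sup_{f ∈ H} |Q_k(univ, f) − (1/m)·∑ f(Sᵢ)| ≥ ε] ≤ 4·(2em/d)^d·exp(−mε²/8)`. -/
theorem stmt7 {α : Type*} [Fintype α] [DecidableEq α] (N k : ℕ)
    (hN : Fintype.card α = N) (hk : k ≤ N)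
    (H : Set (Finset α → ℝ)) (hH : H.Nonempty)
    (hbool : ∀ f ∈ H, ∀ S : Finset α, f S = 0 ∨ f S = 1)
    (d : ℕ) (hd : 1 ≤ d) (hVC : VCDimEq k H d)
    (m : ℕ) (hm : d ≤ m) (ε : ℝ) (hε : 0 < ε) :
    (uniformKTuples α k m (hk.trans_eq hN.symm)).toOuterMeasure
        {S | ε ≤ ⨆ f : H, |Qk k Finset.univ f.1 - (1 / (m : ℝ)) * ∑ i, f.1 (S i).1|} ≤
      ENNReal.ofReal
        (4 * (2 * Real.exp 1 * m / d) ^ d * Real.exp (-((m : ℝ) * ε ^ 2) / 8)) := by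
  classical
  haveI hKne : Nonempty {S : Finset α // S.card = k} := by
    obtain ⟨s, -, hs⟩ := Finset.exists_subset_card_eq
      (show k ≤ (Finset.univ : Finset α).card by simp [hN, hk])
    exact ⟨⟨s, hs⟩⟩
  set n := Fintype.card {S : Finset α // S.card = k} with hn
  have hn1 : 0 < n := Fintype.card_pos
  have hm1 : 1 ≤ m := hd.trans hm
  have hmR : 0 < (m : ℝ) := by exact_mod_cast hm1
  have hnR : 0 < (n : ℝ) := by exact_mod_cast hn1
  set e8 := Real.exp (-((m : ℝ) * ε ^ 2) / 8) with he8
  have he8pos : 0 < e8 := Real.exp_pos _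
  have heone : (1:ℝ) ≤ Real.exp 1 := Real.one_le_exp_iff.2 (by norm_num)
  set R := 4 * (2 * Real.exp 1 * (m:ℝ) / d) ^ d * e8 with hR
  have hdR : 0 < (d : ℝ) := by exact_mod_cast hd
  have hbase : (1:ℝ) ≤ 2 * Real.exp 1 * m / d := by
    rw [le_div_iff₀ hdR]
    have hdm : (d : ℝ) ≤ (m : ℝ) := by exact_mod_cast hm
    nlinarith
  have hRpos : 0 < R := by
    apply mul_pos (by positivity) he8pos
  -- identification of Qk with the average over the subtype
  have hQ : ∀ f : Finset α → ℝ, Qk k Finset.univ f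
      = ((n : ℝ))⁻¹ * ∑ s : {S : Finset α // S.card = k}, f s.1 := by
    intro f
    have hset : Finset.univ.powersetCard k
        = Finset.univ.filter (fun S : Finset α => S.card = k) := by
      ext S
      simp [Finset.mem_powersetCard, Finset.subset_univ]
    have hcard : n = (Finset.univ : Finset α).card.choose k := by
      rw [hn, Fintype.card_subtype, ← hset, Finset.card_powersetCard]
    have hsum : ∑ s : {S : Finset α // S.card = k}, f s.1
        = ∑ S ∈ Finset.univ.powersetCard k, f S := by
      rw [hset]
      exact (Finset.sum_subtype _ (fun S => by simp) f).symm
    rw [Qk, hsum, ← hcard]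
  -- 0/1 representation of sums
  have hrepj : ∀ f ∈ H, ∃ j : ℕ, j ≤ n ∧ ∑ s : {S : Finset α // S.card = k}, f s.1 = j := by
    intro f hf
    refine ⟨(Finset.univ.filter
      (fun s : {S : Finset α // S.card = k} => f s.1 = 1)).card, ?_, ?_⟩
    · exact le_trans (Finset.card_filter_le _ _) (by rw [Finset.card_univ])
    · exact sum01 Finset.univ _ (fun s _ => hbool f hf s.1)
  have hrepl : ∀ f ∈ H, ∀ ω : Fin m → {S : Finset α // S.card = k},
      ∃ l : ℕ, l ≤ m ∧ ∑ i, f (ω i).1 = l := by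
    intro f hf ω
    refine ⟨(Finset.univ.filter (fun i : Fin m => f (ω i).1 = 1)).card, ?_, ?_⟩
    · exact le_trans (Finset.card_filter_le _ _) (by simp)
    · exact sum01 Finset.univ _ (fun i _ => hbool f hf (ω i).1)
  -- witness extraction
  have hwit : ∀ ω : Fin m → {S : Finset α // S.card = k},
      (ε ≤ ⨆ f : H, |Qk k Finset.univ f.1 - (1 / (m : ℝ)) * ∑ i, f.1 (ω i).1|) →
      ∃ f ∈ H, ε ≤ |Qk k Finset.univ f - (1 / (m : ℝ)) * ∑ i, f (ω i).1| := by
    intro ω hω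
    haveI : Nonempty H := hH.to_subtype
    set g : H → ℝ := fun f => |Qk k Finset.univ f.1 - (1 / (m : ℝ)) * ∑ i, f.1 (ω i).1|
      with hgdef
    have hfin : (Set.range g).Finite := by
      apply Set.Finite.subset (Set.Finite.image
        (fun jl : ℕ × ℕ => |((n:ℝ))⁻¹ * jl.1 - (1 / (m : ℝ)) * jl.2|)
        (((Set.finite_Iic n).prod (Set.finite_Iic m))))
      rintro x ⟨f, rfl⟩
      obtain ⟨j, hj, hjs⟩ := hrepj f.1 f.2
      obtain ⟨l, hl, hls⟩ := hrepl f.1 f.2 ω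
      exact ⟨(j, l), ⟨hj, hl⟩, by rw [hgdef]; simp only []; rw [hQ, hjs, hls]⟩
    have h1 : sSup (Set.range g) ∈ Set.range g :=
      Set.Nonempty.csSup_mem (Set.range_nonempty g) hfin
    obtain ⟨f0, hf0⟩ := h1
    have h2 : ε ≤ sSup (Set.range g) := by rwa [sSup_range]
    refine ⟨f0.1, f0.2, ?_⟩
    rw [← hf0] at h2
    exact h2
  -- the bad-event finset
  set A' : Finset (Fin m → {S : Finset α // S.card = k}) :=
    Finset.univ.filter
      (fun ω => ε ≤ ⨆ f : H, |Qk k Finset.univ f.1 - (1 / (m : ℝ)) * ∑ i, f.1 (ω i).1|)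
    with hA'
  -- reduce to a real counting inequality
  have hcardΩ : Fintype.card (Fin m → {S : Finset α // S.card = k}) = n ^ m := by
    rw [Fintype.card_fun, Fintype.card_fin]
  suffices hreal : (A'.card : ℝ) ≤ R * (n : ℝ) ^ m by
    have hμ : (uniformKTuples α k m (hk.trans_eq hN.symm)).toOuterMeasure
        {S | ε ≤ ⨆ f : H, |Qk k Finset.univ f.1 - (1 / (m : ℝ)) * ∑ i, f.1 (S i).1|}
        = (A'.card : ℝ≥0∞) * (((n : ℝ≥0∞)) ^ m)⁻¹ := by
      rw [show uniformKTuples α k m (hk.trans_eq hN.symm)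
        = PMF.uniformOfFintype (Fin m → {S : Finset α // S.card = k}) from rfl]
      rw [PMF.toOuterMeasure_apply, tsum_fintype]
      have : ∀ ω : Fin m → {S : Finset α // S.card = k},
          Set.indicator {S | ε ≤ ⨆ f : H,
            |Qk k Finset.univ f.1 - (1 / (m : ℝ)) * ∑ i, f.1 (S i).1|}
          (⇑(PMF.uniformOfFintype (Fin m → {S : Finset α // S.card = k}))) ω
          = if (ε ≤ ⨆ f : H, |Qk k Finset.univ f.1 - (1 / (m : ℝ)) * ∑ i, f.1 (ω i).1|)
            then ((n : ℝ≥0∞) ^ m)⁻¹ else 0 := by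
        intro ω
        simp only [Set.indicator_apply, Set.mem_setOf_eq]
        split_ifs with h
        · rw [PMF.uniformOfFintype_apply, hcardΩ]; push_cast; ring
        · rfl
      rw [Finset.sum_congr rfl (fun ω _ => this ω), Finset.sum_ite, Finset.sum_const,
        Finset.sum_const_zero, add_zero, nsmul_eq_mul]
    rw [hμ]
    have hc0 : ((n : ℝ≥0∞)) ^ m ≠ 0 := by
      apply pow_ne_zero; exact_mod_cast hn1.ne'
    have hcT : ((n : ℝ≥0∞)) ^ m ≠ ⊤ := by
      apply ENNReal.pow_ne_top; exact ENNReal.natCast_ne_top n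
    have h2 : (A'.card : ℝ≥0∞) ≤ ENNReal.ofReal (R * (n:ℝ) ^ m) := by
      rw [← ENNReal.ofReal_natCast]
      exact ENNReal.ofReal_le_ofReal hreal
    calc (A'.card : ℝ≥0∞) * (((n : ℝ≥0∞)) ^ m)⁻¹
        ≤ ENNReal.ofReal (R * (n:ℝ) ^ m) * (((n : ℝ≥0∞)) ^ m)⁻¹ :=
          mul_le_mul_left h2 _
      _ = ENNReal.ofReal R * (((n : ℝ≥0∞)) ^ m * (((n : ℝ≥0∞)) ^ m)⁻¹) := by
          rw [ENNReal.ofReal_mul hRpos.le]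
          rw [show ENNReal.ofReal ((n:ℝ) ^ m) = ((n : ℝ≥0∞)) ^ m by
            rw [ENNReal.ofReal_pow hnR.le, ENNReal.ofReal_natCast]]
          ring
      _ = ENNReal.ofReal R := by rw [ENNReal.mul_inv_cancel hc0 hcT, mul_one]
  by_cases hme : 2 ≤ (m : ℝ) * ε ^ 2
  · -- MAIN CASE
    -- the symmetrized bad event
    set B' : Finset ((Fin m → {S : Finset α // S.card = k}) × (Fin m → {S : Finset α // S.card = k})) :=
      Finset.univ.filter (fun q => ∃ f ∈ H, ε/2 ≤
        |(1 / (m : ℝ)) * ∑ i, f (q.1 i).1 - (1 / (m : ℝ)) * ∑ i, f (q.2 i).1|) with hB'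
    -- KEY: pointwise symmetrization via Chebyshev
    have key : ∀ ω ∈ A', ((n:ℝ))^m ≤ 2 * ((Finset.univ.filter
        (fun ω' : Fin m → {S : Finset α // S.card = k} => (ω, ω') ∈ B')).card : ℝ) := by
      intro ω hω
      obtain ⟨f, hfH, hfw⟩ := hwit ω (Finset.mem_filter.1 hω).2
      obtain ⟨j, hj, hjs⟩ := hrepj f hfH
      set p : ℝ := Qk k Finset.univ f with hp
      have hpj : (n:ℝ) * p = j := by rw [hp, hQ, hjs]; field_simp
      set g : {S : Finset α // S.card = k} → ℝ := fun s => f s.1 - p with hg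
      have hg0 : ∑ s : {S : Finset α // S.card = k}, g s = 0 := by
        simp only [hg]
        rw [Finset.sum_sub_distrib, hjs, Finset.sum_const, Finset.card_univ, ← hn,
          nsmul_eq_mul, hpj, sub_self]
      have hgsq : ∑ s : {S : Finset α // S.card = k}, (g s)^2 ≤ (n:ℝ)/4 := by
        have hsplit : ∀ s : {S : Finset α // S.card = k},
            (g s)^2 = f s.1 - 2*p*(f s.1) + p^2 := by
          intro s
          rcases hbool f hfH s.1 with h|h <;> simp only [hg, h] <;> ring
        rw [Finset.sum_congr rfl (fun s _ => hsplit s), Finset.sum_add_distrib,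
          Finset.sum_sub_distrib, hjs, ← Finset.mul_sum, hjs, Finset.sum_const,
          Finset.card_univ, ← hn, nsmul_eq_mul, ← hpj]
        nlinarith [hnR.le, sq_nonneg (2*p - 1)]
      have hvar := sum_pi_sq (K := {S : Finset α // S.card = k}) m g hg0
      have hpt : ∀ ω' : Fin m → {S : Finset α // S.card = k},
          (1 / (m : ℝ)) * ∑ i, f (ω' i).1 - p = (1/(m:ℝ)) * ∑ i, g (ω' i) := by
        intro ω'
        have h1 : ∑ i, g (ω' i) = (∑ i, f (ω' i).1) - m * p := by
          simp only [hg]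
          rw [Finset.sum_sub_distrib, Finset.sum_const, Finset.card_univ, Fintype.card_fin,
            nsmul_eq_mul]
        rw [h1]
        field_simp
      set bad := Finset.univ.filter (fun ω' : Fin m → {S : Finset α // S.card = k} =>
        ¬ |(1 / (m : ℝ)) * ∑ i, f (ω' i).1 - p| ≤ ε/2) with hbad
      have hbadcount : (bad.card : ℝ) * (ε/2)^2 ≤ (n:ℝ)^m / (4*m) := by
        have h1 : ∀ ω' ∈ bad, (ε/2)^2 ≤ ((1/(m:ℝ)) * ∑ i, g (ω' i))^2 := by
          intro ω' hω'
          have h2 := (Finset.mem_filter.1 hω').2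
          push_neg at h2
          rw [← hpt ω']
          have h3 : (0:ℝ) ≤ ε/2 := by positivity
          have h4 := pow_lt_pow_left₀ h2 h3 (n := 2) (by norm_num)
          rw [sq_abs] at h4
          exact h4.le
        have hpow : (n:ℝ)^(m-1) * (n:ℝ) = (n:ℝ)^m := by
          rw [← pow_succ, Nat.sub_add_cancel hm1]
        calc (bad.card : ℝ) * (ε/2)^2 = ∑ _ω' ∈ bad, (ε/2)^2 := by
              rw [Finset.sum_const, nsmul_eq_mul]
          _ ≤ ∑ ω' ∈ bad, ((1/(m:ℝ)) * ∑ i, g (ω' i))^2 := Finset.sum_le_sum h1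
          _ ≤ ∑ ω' : Fin m → {S : Finset α // S.card = k}, ((1/(m:ℝ)) * ∑ i, g (ω' i))^2 :=
              Finset.sum_le_sum_of_subset_of_nonneg (Finset.filter_subset _ _)
                (fun _ _ _ => sq_nonneg _)
          _ = (1/(m:ℝ))^2 * ∑ ω' : Fin m → {S : Finset α // S.card = k}, (∑ i, g (ω' i))^2 := by
              rw [Finset.mul_sum]
              apply Finset.sum_congr rfl
              intro ω' _
              ring
          _ = (1/(m:ℝ))^2 * ((n:ℝ)^(m-1) * m * ∑ s : {S : Finset α // S.card = k}, (g s)^2) := by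
              rw [hvar, ← hn]
          _ ≤ (1/(m:ℝ))^2 * ((n:ℝ)^(m-1) * m * ((n:ℝ)/4)) := by
              apply mul_le_mul_of_nonneg_left _ (by positivity)
              apply mul_le_mul_of_nonneg_left hgsq (by positivity)
          _ = (n:ℝ)^m / (4*m) := by
              rw [show (n:ℝ)^(m-1) * (m:ℝ) * ((n:ℝ)/4) = ((n:ℝ)^(m-1) * (n:ℝ)) * (m:ℝ) / 4 by ring,
                hpow]
              field_simp
      have hbadle : (bad.card : ℝ) ≤ (n:ℝ)^m / 2 := by
        have h9 : (bad.card:ℝ) * 2 ≤ (bad.card:ℝ) * ((m:ℝ)*ε^2) := by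
          have : (0:ℝ) ≤ (bad.card : ℝ) := Nat.cast_nonneg _
          nlinarith
        have h10 : (bad.card:ℝ) * ((m:ℝ)*ε^2) = ((bad.card:ℝ) * (ε/2)^2) * (4*m) := by ring
        have h11 : ((bad.card:ℝ) * (ε/2)^2) * (4*m) ≤ ((n:ℝ)^m / (4*m)) * (4*m) :=
          mul_le_mul_of_nonneg_right hbadcount (by positivity)
        have h12 : ((n:ℝ)^m / (4*m)) * (4*m) = (n:ℝ)^m := by field_simp
        linarith
      have hsplitcard : (Finset.univ.filter
          (fun ω' : Fin m → {S : Finset α // S.card = k} =>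
            |(1 / (m : ℝ)) * ∑ i, f (ω' i).1 - p| ≤ ε/2)).card + bad.card = n^m := by
        rw [hbad, Finset.card_filter_add_card_filter_not, Finset.card_univ, hcardΩ]
      have hgoodsub : Finset.univ.filter
          (fun ω' : Fin m → {S : Finset α // S.card = k} =>
            |(1 / (m : ℝ)) * ∑ i, f (ω' i).1 - p| ≤ ε/2)
          ⊆ Finset.univ.filter
            (fun ω' : Fin m → {S : Finset α // S.card = k} => (ω, ω') ∈ B') := by
        intro ω' hω'
        have h10 := (Finset.mem_filter.1 hω').2
        refine Finset.mem_filter.2 ⟨Finset.mem_univ _, ?_⟩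
        rw [hB']
        refine Finset.mem_filter.2 ⟨Finset.mem_univ _, ⟨f, hfH, ?_⟩⟩
        obtain ⟨h11a, h11b⟩ := abs_le.1 h10
        rcases le_abs.1 hfw with h12 | h12
        · apply le_abs.2
          right
          linarith
        · apply le_abs.2
          left
          linarith
      have hgood : ((Finset.univ.filter
          (fun ω' : Fin m → {S : Finset α // S.card = k} =>
            |(1 / (m : ℝ)) * ∑ i, f (ω' i).1 - p| ≤ ε/2)).card : ℝ)
          = (n:ℝ)^m - bad.card := by
        have hc := congrArg (Nat.cast : ℕ → ℝ) hsplitcard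
        push_cast at hc
        linarith
      have hmono : ((Finset.univ.filter
          (fun ω' : Fin m → {S : Finset α // S.card = k} =>
            |(1 / (m : ℝ)) * ∑ i, f (ω' i).1 - p| ≤ ε/2)).card : ℝ)
          ≤ ((Finset.univ.filter
            (fun ω' : Fin m → {S : Finset α // S.card = k} => (ω, ω') ∈ B')).card : ℝ) := by
        exact_mod_cast Finset.card_le_card hgoodsub
      linarith
    -- CLAIM 1 : aggregation of the symmetrization step
    have claim1 : (A'.card : ℝ) * (n:ℝ)^m ≤ 2 * (B'.card : ℝ) := by
      set u : (Fin m → {S : Finset α // S.card = k}) →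
          Finset ((Fin m → {S : Finset α // S.card = k}) × (Fin m → {S : Finset α // S.card = k})) :=
        fun ω => {ω} ×ˢ (Finset.univ.filter
          (fun ω' : Fin m → {S : Finset α // S.card = k} => (ω, ω') ∈ B')) with hu
      have hdisj : (A' : Set (Fin m → {S : Finset α // S.card = k})).PairwiseDisjoint u := by
        intro x _ y _ hxy
        apply Finset.disjoint_left.2
        intro q hqx hqy
        simp only [hu, Finset.mem_product, Finset.mem_singleton] at hqx hqy
        exact hxy (hqx.1.symm.trans hqy.1)
      have hsub2 : A'.biUnion u ⊆ B' := by
        intro q hq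
        obtain ⟨ω, -, hqu⟩ := Finset.mem_biUnion.1 hq
        simp only [hu, Finset.mem_product, Finset.mem_singleton] at hqu
        obtain ⟨hq1, hq2⟩ := hqu
        have := (Finset.mem_filter.1 hq2).2
        have hqq : q = (ω, q.2) := by rw [← hq1]
        rw [hqq]
        exact this
      have hcb : (A'.biUnion u).card = ∑ ω ∈ A', (u ω).card := Finset.card_biUnion hdisj
      have hucard : ∀ ω, (u ω).card = (Finset.univ.filter
          (fun ω' : Fin m → {S : Finset α // S.card = k} => (ω, ω') ∈ B')).card := by
        intro ω
        rw [hu]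
        simp [Finset.card_product]
      calc (A'.card:ℝ) * (n:ℝ)^m = ∑ _ω ∈ A', (n:ℝ)^m := by
            rw [Finset.sum_const, nsmul_eq_mul]
        _ ≤ ∑ ω ∈ A', 2 * ((Finset.univ.filter
              (fun ω' : Fin m → {S : Finset α // S.card = k} => (ω, ω') ∈ B')).card : ℝ) :=
            Finset.sum_le_sum key
        _ = 2 * ∑ ω ∈ A', ((Finset.univ.filter
              (fun ω' : Fin m → {S : Finset α // S.card = k} => (ω, ω') ∈ B')).card : ℝ) := by
            rw [Finset.mul_sum]
        _ = 2 * ((A'.biUnion u).card : ℝ) := by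
            congr 1
            rw [hcb]
            push_cast
            exact Finset.sum_congr rfl (fun ω _ => by rw [hucard ω])
        _ ≤ 2 * (B'.card : ℝ) := by
            have := Finset.card_le_card hsub2
            have h2 : ((A'.biUnion u).card : ℝ) ≤ (B'.card : ℝ) := by exact_mod_cast this
            linarith
    -- the swapping involution
    set sw : (Fin m → Bool) →
        ((Fin m → {S : Finset α // S.card = k}) × (Fin m → {S : Finset α // S.card = k})) →
        ((Fin m → {S : Finset α // S.card = k}) × (Fin m → {S : Finset α // S.card = k})) :=
      fun σ q => ((fun i => if σ i then q.2 i else q.1 i), (fun i => if σ i then q.1 i else q.2 i))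
      with hswdef
    have hsw2 : ∀ σ q, sw σ (sw σ q) = q := by
      intro σ q
      rw [hswdef]
      refine Prod.ext ?_ ?_ <;> funext i <;> by_cases h : σ i <;> simp [h]
    have hcardswap : ∀ σ : Fin m → Bool, B'.card = (Finset.univ.filter
        (fun q : (Fin m → {S : Finset α // S.card = k}) × (Fin m → {S : Finset α // S.card = k}) =>
          sw σ q ∈ B')).card := by
      intro σ
      apply Finset.card_bij' (fun q _ => sw σ q) (fun q _ => sw σ q)
      · intro q hq
        refine Finset.mem_filter.2 ⟨Finset.mem_univ _, ?_⟩
        rw [hsw2]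
        exact hq
      · intro q hq
        exact (Finset.mem_filter.1 hq).2
      · intro q _
        exact hsw2 σ q
      · intro q _
        exact hsw2 σ q
    -- sum over swaps
    have hswsum : (2:ℝ)^m * (B'.card : ℝ) = ∑ q : (Fin m → {S : Finset α // S.card = k}) ×
        (Fin m → {S : Finset α // S.card = k}),
        ((Finset.univ.filter (fun σ : Fin m → Bool => sw σ q ∈ B')).card : ℝ) := by
      calc (2:ℝ)^m * (B'.card : ℝ) = ∑ _σ : Fin m → Bool, (B'.card:ℝ) := by
            rw [Finset.sum_const, Finset.card_univ, Fintype.card_fun, Fintype.card_bool,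
              Fintype.card_fin, nsmul_eq_mul]
            push_cast
            ring
        _ = ∑ σ : Fin m → Bool, ((Finset.univ.filter
              (fun q : (Fin m → {S : Finset α // S.card = k}) ×
                (Fin m → {S : Finset α // S.card = k}) => sw σ q ∈ B')).card : ℝ) :=
            Finset.sum_congr rfl (fun σ _ => by exact_mod_cast hcardswap σ)
        _ = _ := filter_swap_sum (fun σ q => sw σ q ∈ B')
    -- the size bound on the pattern class, per pair q
    set G' : ℕ := ∑ i ∈ Finset.range (d+1), (2*m).choose i with hG'
    have hq : ∀ q : (Fin m → {S : Finset α // S.card = k}) ×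
        (Fin m → {S : Finset α // S.card = k}),
        ((Finset.univ.filter (fun σ : Fin m → Bool => sw σ q ∈ B')).card : ℝ)
        ≤ (G' : ℝ) * ((2:ℝ)^m * (2 * e8)) := by
      intro q
      set T : Finset (Finset α) := (Finset.univ.image (fun i : Fin m => (q.1 i).1))
        ∪ (Finset.univ.image (fun i : Fin m => (q.2 i).1)) with hT
      have hTcard : T.card ≤ 2*m := by
        calc T.card ≤ (Finset.univ.image (fun i : Fin m => (q.1 i).1)).card
              + (Finset.univ.image (fun i : Fin m => (q.2 i).1)).card := Finset.card_union_le _ _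
          _ ≤ m + m := add_le_add
              (le_trans (Finset.card_image_le) (by simp))
              (le_trans (Finset.card_image_le) (by simp))
          _ = 2*m := by ring
      have hTk : ∀ S ∈ T, S.card = k := by
        intro S hS
        rcases Finset.mem_union.1 hS with h | h
        · obtain ⟨i, -, rfl⟩ := Finset.mem_image.1 h
          exact (q.1 i).2
        · obtain ⟨i, -, rfl⟩ := Finset.mem_image.1 h
          exact (q.2 i).2
      set 𝒜 : Finset (Finset (Finset α)) :=
        T.powerset.filter (fun Z => ∃ f ∈ H, Z = T.filter (fun S => f S = 1)) with h𝒜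
      have hχ : ∀ f ∈ H, ∀ S ∈ T,
          f S = (if S ∈ T.filter (fun S' => f S' = 1) then (1:ℝ) else 0) := by
        intro f hf S hS
        by_cases hZ : S ∈ T.filter (fun S' => f S' = 1)
        · rw [if_pos hZ]
          exact (Finset.mem_filter.1 hZ).2
        · rw [if_neg hZ]
          rcases hbool f hf S with h|h
          · exact h
          · exact absurd (Finset.mem_filter.2 ⟨hS, h⟩) hZ
      have hsubσ : Finset.univ.filter (fun σ : Fin m → Bool => sw σ q ∈ B')
          ⊆ 𝒜.biUnion (fun Z => Finset.univ.filter (fun σ : Fin m → Bool =>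
              (m:ℝ)*(ε/2) ≤ |∑ i, (if σ i then (-1:ℝ) else 1) *
                ((fun l => (if (q.1 l).1 ∈ Z then (1:ℝ) else 0)
                  - (if (q.2 l).1 ∈ Z then (1:ℝ) else 0)) i)|)) := by
        intro σ hσ
        have hmem := (Finset.mem_filter.1 hσ).2
        rw [hB'] at hmem
        obtain ⟨f, hf, hfle⟩ := (Finset.mem_filter.1 hmem).2
        refine Finset.mem_biUnion.2 ⟨T.filter (fun S => f S = 1), ?_, ?_⟩
        · rw [h𝒜]
          exact Finset.mem_filter.2 ⟨Finset.mem_powerset.2 (Finset.filter_subset _ _),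
            ⟨f, hf, rfl⟩⟩
        · refine Finset.mem_filter.2 ⟨Finset.mem_univ _, ?_⟩
          have hsum : (1/(m:ℝ)) * ∑ i, f ((sw σ q).1 i).1
                - (1/(m:ℝ)) * ∑ i, f ((sw σ q).2 i).1
              = (1/(m:ℝ)) * ∑ i, (if σ i then (-1:ℝ) else 1) *
                ((if (q.1 i).1 ∈ T.filter (fun S => f S = 1) then (1:ℝ) else 0)
                  - (if (q.2 i).1 ∈ T.filter (fun S => f S = 1) then (1:ℝ) else 0)) := by
            rw [← mul_sub, ← Finset.sum_sub_distrib]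
            congr 1
            apply Finset.sum_congr rfl
            intro i _
            have hq1T : (q.1 i).1 ∈ T := by
              rw [hT]
              exact Finset.mem_union_left _ (Finset.mem_image.2 ⟨i, Finset.mem_univ _, rfl⟩)
            have hq2T : (q.2 i).1 ∈ T := by
              rw [hT]
              exact Finset.mem_union_right _ (Finset.mem_image.2 ⟨i, Finset.mem_univ _, rfl⟩)
            have e1 : (sw σ q).1 i = if σ i then q.2 i else q.1 i := by rw [hswdef]
            have e2 : (sw σ q).2 i = if σ i then q.1 i else q.2 i := by rw [hswdef]
            by_cases hσi : σ i
            · rw [e1, e2, if_pos hσi, if_pos hσi, if_pos hσi,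
                hχ f hf _ hq1T, hχ f hf _ hq2T]
              ring
            · rw [e1, e2, if_neg hσi, if_neg hσi, if_neg hσi,
                hχ f hf _ hq1T, hχ f hf _ hq2T]
              ring
          rw [hsum] at hfle
          show (m:ℝ)*(ε/2) ≤ |∑ i, (if σ i then (-1:ℝ) else 1) *
              ((if (q.1 i).1 ∈ T.filter (fun S => f S = 1) then (1:ℝ) else 0)
                - (if (q.2 i).1 ∈ T.filter (fun S => f S = 1) then (1:ℝ) else 0))|
          rw [abs_mul, abs_of_pos (by positivity : (0:ℝ) < 1/(m:ℝ))] at hfle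
          have h13 := mul_le_mul_of_nonneg_left hfle hmR.le
          calc (m:ℝ)*(ε/2) ≤ (m:ℝ) * ((1/(m:ℝ)) * |∑ i, (if σ i then (-1:ℝ) else 1) *
                ((if (q.1 i).1 ∈ T.filter (fun S => f S = 1) then (1:ℝ) else 0)
                  - (if (q.2 i).1 ∈ T.filter (fun S => f S = 1) then (1:ℝ) else 0))|) := h13
            _ = _ := by field_simp
      have hcount : ∀ Z ∈ 𝒜, ((Finset.univ.filter (fun σ : Fin m → Bool =>
          (m:ℝ)*(ε/2) ≤ |∑ i, (if σ i then (-1:ℝ) else 1) *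
            ((fun l => (if (q.1 l).1 ∈ Z then (1:ℝ) else 0)
              - (if (q.2 l).1 ∈ Z then (1:ℝ) else 0)) i)|)).card : ℝ)
          ≤ (2:ℝ)^m * (2 * e8) := by
        intro Z _
        have ha : ∀ i : Fin m, |(fun l => (if (q.1 l).1 ∈ Z then (1:ℝ) else 0)
            - (if (q.2 l).1 ∈ Z then (1:ℝ) else 0)) i| ≤ 1 := by
          intro i
          by_cases h1 : (q.1 i).1 ∈ Z <;> by_cases h2 : (q.2 i).1 ∈ Z <;> simp [h1, h2]
        have ht : (0:ℝ) ≤ (m:ℝ)*(ε/2) := by positivity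
        have h := count_signs m hm1 _ ha _ ht
        refine h.trans ?_
        have hexp : Real.exp (-((m:ℝ)*(ε/2))^2/(2*m)) = e8 := by
          rw [he8]
          congr 1
          field_simp
          ring
        rw [hexp]
      -- Sauer--Shelah bound on the pattern class
      have h𝒜G : 𝒜.card ≤ G' := by
        have hsubsh : 𝒜.shatterer ⊆ (Finset.range (d+1)).biUnion
            (fun i => T.powersetCard i) := by
          intro X hX
          have hshat := Finset.mem_shatterer.1 hX
          obtain ⟨v, hv, hXv⟩ := hshat (Finset.Subset.refl X)
          have hvT : v ⊆ T := by
            rw [h𝒜] at hv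
            exact Finset.mem_powerset.1 (Finset.mem_filter.1 hv).1
          have hXT : X ⊆ T := (Finset.inter_eq_left.1 hXv).trans hvT
          have hXd : X.card ≤ d := by
            apply hVC.2
            refine ⟨X, ⟨fun S hS => hTk S (hXT hS), ?_⟩, rfl⟩
            intro Y hYX
            obtain ⟨v', hv', hYv'⟩ := hshat hYX
            rw [h𝒜] at hv'
            obtain ⟨f, hf, hfv'⟩ := (Finset.mem_filter.1 hv').2
            refine ⟨f, hf, ?_, ?_⟩
            · intro S hS
              have hSv' : S ∈ X ∩ v' := by rw [hYv']; exact hS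
              have := Finset.mem_inter.1 hSv'
              rw [hfv'] at this
              exact (Finset.mem_filter.1 this.2).2
            · intro S hS
              rcases Finset.mem_sdiff.1 hS with ⟨hSX, hSY⟩
              rcases hbool f hf S with h|h
              · exact h
              · exfalso
                apply hSY
                have hSv' : S ∈ v' := by
                  rw [hfv']
                  exact Finset.mem_filter.2 ⟨hXT hSX, h⟩
                rw [← hYv']
                exact Finset.mem_inter.2 ⟨hSX, hSv'⟩
          exact Finset.mem_biUnion.2 ⟨X.card, Finset.mem_range.2 (Nat.lt_succ_of_le hXd),
            Finset.mem_powersetCard.2 ⟨hXT, rfl⟩⟩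
        calc 𝒜.card ≤ 𝒜.shatterer.card := Finset.card_le_card_shatterer 𝒜
          _ ≤ ((Finset.range (d+1)).biUnion (fun i => T.powersetCard i)).card :=
              Finset.card_le_card hsubsh
          _ ≤ ∑ i ∈ Finset.range (d+1), (T.powersetCard i).card := Finset.card_biUnion_le
          _ = ∑ i ∈ Finset.range (d+1), T.card.choose i := by
              apply Finset.sum_congr rfl
              intro i _
              rw [Finset.card_powersetCard]
          _ ≤ G' := by
              rw [hG']
              exact Finset.sum_le_sum (fun i _ => Nat.choose_le_choose i hTcard)
      calc ((Finset.univ.filter (fun σ : Fin m → Bool => sw σ q ∈ B')).card : ℝ)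
          ≤ ((𝒜.biUnion (fun Z => Finset.univ.filter (fun σ : Fin m → Bool =>
              (m:ℝ)*(ε/2) ≤ |∑ i, (if σ i then (-1:ℝ) else 1) *
                ((fun l => (if (q.1 l).1 ∈ Z then (1:ℝ) else 0)
                  - (if (q.2 l).1 ∈ Z then (1:ℝ) else 0)) i)|))).card : ℝ) := by
            exact_mod_cast Finset.card_le_card hsubσ
        _ ≤ ((∑ Z ∈ 𝒜, (Finset.univ.filter (fun σ : Fin m → Bool =>
              (m:ℝ)*(ε/2) ≤ |∑ i, (if σ i then (-1:ℝ) else 1) *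
                ((fun l => (if (q.1 l).1 ∈ Z then (1:ℝ) else 0)
                  - (if (q.2 l).1 ∈ Z then (1:ℝ) else 0)) i)|)).card : ℕ) : ℝ) := by
            exact_mod_cast Finset.card_biUnion_le
        _ ≤ ∑ Z ∈ 𝒜, (2:ℝ)^m * (2*e8) := by
            rw [Nat.cast_sum]
            exact Finset.sum_le_sum hcount
        _ = (𝒜.card : ℝ) * ((2:ℝ)^m*(2*e8)) := by
            rw [Finset.sum_const, nsmul_eq_mul]
        _ ≤ (G':ℝ) * ((2:ℝ)^m*(2*e8)) := by
            have h15 : (0:ℝ) ≤ (2:ℝ)^m*(2*e8) := by positivity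
            exact mul_le_mul_of_nonneg_right (by exact_mod_cast h𝒜G) h15
    -- CLAIM 2
    have claim2 : (B'.card : ℝ) ≤ ((n:ℝ)^m * (n:ℝ)^m) * ((G':ℝ) * (2*e8)) := by
      have h16 : (2:ℝ)^m * (B'.card : ℝ)
          ≤ (2:ℝ)^m * (((n:ℝ)^m * (n:ℝ)^m) * ((G':ℝ) * (2*e8))) := by
        calc (2:ℝ)^m * (B'.card : ℝ)
            = ∑ q : (Fin m → {S : Finset α // S.card = k}) ×
              (Fin m → {S : Finset α // S.card = k}),
              ((Finset.univ.filter (fun σ : Fin m → Bool => sw σ q ∈ B')).card : ℝ) := hswsum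
          _ ≤ ∑ _q : (Fin m → {S : Finset α // S.card = k}) ×
              (Fin m → {S : Finset α // S.card = k}), (G':ℝ) * ((2:ℝ)^m * (2*e8)) :=
              Finset.sum_le_sum (fun q _ => hq q)
          _ = (2:ℝ)^m * (((n:ℝ)^m * (n:ℝ)^m) * ((G':ℝ) * (2*e8))) := by
              rw [Finset.sum_const, Finset.card_univ, Fintype.card_prod, hcardΩ, nsmul_eq_mul]
              push_cast
              ring
      exact le_of_mul_le_mul_left h16 (by positivity)
    -- growth bound
    have claimG : (G' : ℝ) ≤ (2*Real.exp 1*(m:ℝ)/d)^d := by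
      have h := sum_choose_le_pow d (2*m) hd (by omega)
      have hGcast : (G':ℝ) = ∑ i ∈ Finset.range (d+1), ((2*m).choose i : ℝ) := by
        rw [hG']
        push_cast
        ring
      rw [hGcast]
      have h17 : ((2*m : ℕ):ℝ) = 2*(m:ℝ) := by push_cast; ring
      refine h.trans_eq ?_
      congr 1
      rw [h17]
      ring
    -- final assembly
    have final : (A'.card:ℝ) * (n:ℝ)^m ≤ (R * (n:ℝ)^m) * (n:ℝ)^m := by
      have h18 : 4 * (G':ℝ) * e8 ≤ R := by
        rw [hR]
        nlinarith [claimG, he8pos]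
      have h19 : (A'.card:ℝ) * (n:ℝ)^m ≤ (4 * (G':ℝ) * e8 * (n:ℝ)^m) * (n:ℝ)^m := by
        calc (A'.card:ℝ) * (n:ℝ)^m ≤ 2*(B'.card:ℝ) := claim1
          _ ≤ 2*(((n:ℝ)^m * (n:ℝ)^m) * ((G':ℝ) * (2*e8))) := by linarith
          _ = (4 * (G':ℝ) * e8 * (n:ℝ)^m) * (n:ℝ)^m := by ring
      have h20 : (4 * (G':ℝ) * e8 * (n:ℝ)^m) * (n:ℝ)^m ≤ (R * (n:ℝ)^m) * (n:ℝ)^m := by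
        apply mul_le_mul_of_nonneg_right _ (pow_nonneg hnR.le m)
        exact mul_le_mul_of_nonneg_right h18 (pow_nonneg hnR.le m)
      linarith
    exact le_of_mul_le_mul_right final (pow_pos hnR m)
  · -- TRIVIAL CASE
    push_neg at hme
    have hAle : (A'.card : ℝ) ≤ (n:ℝ) ^ m := by
      calc (A'.card:ℝ) ≤ ((Finset.univ : Finset (Fin m → {S : Finset α // S.card = k})).card : ℝ) := by
            exact_mod_cast Finset.card_filter_le _ _
        _ = (n:ℝ)^m := by rw [Finset.card_univ, hcardΩ]; push_cast; ring
    have hR1 : (1:ℝ) ≤ R := by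
      have hBd : (1:ℝ) ≤ (2*Real.exp 1*(m:ℝ)/d)^d := one_le_pow₀ hbase
      have he8q : (1:ℝ)/4 ≤ e8 := by
        have h1 : Real.exp (-(1/4) : ℝ) ≤ e8 := by
          rw [he8]
          apply Real.exp_le_exp.2
          have : (m:ℝ) * ε^2 ≤ 2 := hme.le
          linarith
        have h2 : (1/4 : ℝ) ≤ Real.exp (-(1/4):ℝ) := by
          rw [Real.exp_neg]
          have h3 : Real.exp (1/4 : ℝ) ≤ 4 := by
            have h5 := Real.exp_one_lt_d9
            have h4 : Real.exp (1/4:ℝ) ≤ Real.exp 1 := Real.exp_le_exp.2 (by norm_num)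
            linarith
          have h6 : (4:ℝ)⁻¹ ≤ (Real.exp (1/4:ℝ))⁻¹ := inv_anti₀ (Real.exp_pos _) h3
          calc (1/4:ℝ) = 4⁻¹ := by norm_num
            _ ≤ (Real.exp (1/4:ℝ))⁻¹ := h6
        linarith
      rw [hR]
      nlinarith [he8pos, hBd, he8q]
    have hfin := mul_le_mul_of_nonneg_right hR1 (le_of_lt (pow_pos hnR m))
    rw [one_mul] at hfin
    linarith
end

section
/- Let E be a measurable space, let X₁, …, X_q be independent identically distributed E-valued random variables on a probability space, and let H be a nonempty finite set of measurable functions from E to [0,1]. Then: E[ max_{f ∈ H} | (1/q) · ∑_{j=1}^q f(X_j) − E[f(X₁)] | ] ≤ ∫₀¹ 2 · |H| · exp(−2·q·x²) dx. In particular, the left-hand side tends to 0 as q → ∞. -/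
/-! For a single `f`, the empirical mean `(1/q) ∑ f(X_j)` has variance `Var f / q ≤ 1 / (4q)`
(Popoviciu), so its mean absolute deviation from `E f` is at most `1 / (2√q)`. Bounding the maximum
over `H` by the sum gives `|H| / (2√q)`, and this is at most the integral because
`2 exp(-2qx²) ≥ 1` on `[0, 1/(2√q)]`. The limit is dominated convergence. -/

open MeasureTheory ProbabilityTheory Filter Topology

lemma integral_abs_sub_integral_le_sqrt_variance {Ω : Type*} [MeasurableSpace Ω]
    {μ : Measure Ω} [IsProbabilityMeasure μ] {X : Ω → ℝ} (hX : MemLp X 2 μ) :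
    ∫ ω, |X ω - μ[X]| ∂μ ≤ √(Var[X; μ]) := by
  have hY : MemLp (fun ω => |X ω - μ[X]|) 2 μ := (hX.sub (memLp_const _)).abs
  have h := variance_nonneg (fun ω => |X ω - μ[X]|) μ
  rw [variance_eq_sub hY] at h
  rw [variance_eq_integral hX.aemeasurable]
  apply Real.le_sqrt_of_sq_le
  simpa [sq_abs] using h

lemma integral_abs_pi_average_sub_le_sqrt_variance_div {ι E : Type*} [Fintype ι] [Nonempty ι]
    [MeasurableSpace E] {ν : Measure E} [IsProbabilityMeasure ν] {f : E → ℝ}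
    (hf : MemLp f 2 ν) :
    ∫ y, |(1 / (Fintype.card ι : ℝ)) * ∑ j, f (y j) - ∫ x, f x ∂ν| ∂(Measure.pi fun _ : ι => ν)
      ≤ √(Var[f; ν] / Fintype.card ι) := by
  set n : ℝ := (Fintype.card ι : ℝ)
  have hn : n ≠ 0 := by simp [n]
  have hcomp : ∀ j, MemLp (fun y : ι → E => f (y j)) 2 (Measure.pi fun _ => ν) := fun j =>
    hf.comp_measurePreserving (measurePreserving_eval _ j)
  have hA : MemLp (fun y : ι → E => (1 / n) * ∑ j, f (y j)) 2 (Measure.pi fun _ => ν) :=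
    (memLp_finsetSum Finset.univ fun j _ => hcomp j).const_mul (1 / n)
  have hmean : ∫ y : ι → E, (1 / n) * ∑ j, f (y j) ∂(Measure.pi fun _ => ν) = ∫ x, f x ∂ν := by
    rw [integral_const_mul, integral_finsetSum _ fun j _ => (hcomp j).integrable one_le_two]
    simp_rw [integral_comp_eval (μ := fun _ : ι => ν) hf.aestronglyMeasurable]
    simp [n, hn]
  have hvar : Var[fun y : ι → E => (1 / n) * ∑ j, f (y j); Measure.pi fun _ => ν]
      = Var[f; ν] / n := by
    have hsum := variance_sum_pi (μ := fun _ : ι => ν) (X := fun _ => f) fun _ => hf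
    rw [variance_const_mul, show (fun y : ι → E => ∑ j, f (y j)) = ∑ j, fun y => f (y j) by
      ext; simp, hsum]
    simp only [one_div, inv_pow, Finset.sum_const, Finset.card_univ, nsmul_eq_mul, n]
    field_simp
  simpa only [hmean, hvar] using integral_abs_sub_integral_le_sqrt_variance hA

lemma integral_abs_average_comp_sub_le {Ω ι E : Type*} [MeasurableSpace Ω] [MeasurableSpace E]
    [Fintype ι] {μ : Measure Ω} [IsProbabilityMeasure μ] {X : ι → Ω → E}
    (hX : ∀ j, Measurable (X j)) (i₀ : ι)
    (hiid : Measure.map (fun ω j => X j ω) μ = Measure.pi fun _ : ι => Measure.map (X i₀) μ)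
    {f : E → ℝ} (hf : Measurable f) (hf01 : ∀ x, f x ∈ Set.Icc (0 : ℝ) 1) :
    ∫ ω, |(1 / (Fintype.card ι : ℝ)) * ∑ j, f (X j ω) - ∫ ω', f (X i₀ ω') ∂μ| ∂μ
      ≤ 1 / (2 * √(Fintype.card ι)) := by
  have : Nonempty ι := ⟨i₀⟩
  set ν := Measure.map (X i₀) μ
  have : IsProbabilityMeasure ν := Measure.isProbabilityMeasure_map (hX i₀).aemeasurable
  have hfν : ∀ᵐ x ∂ν, f x ∈ Set.Icc (0 : ℝ) 1 := ae_of_all _ hf01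
  have hmean : ∫ ω', f (X i₀ ω') ∂μ = ∫ x, f x ∂ν :=
    (integral_map (hX i₀).aemeasurable hf.aestronglyMeasurable).symm
  have hpush : ∫ ω, |(1 / (Fintype.card ι : ℝ)) * ∑ j, f (X j ω) - ∫ x, f x ∂ν| ∂μ
      = ∫ y, |(1 / (Fintype.card ι : ℝ)) * ∑ j, f (y j) - ∫ x, f x ∂ν|
          ∂(Measure.pi fun _ : ι => ν) := by
    rw [← hiid, integral_map (measurable_pi_lambda _ hX).aemeasurable
      (Measurable.aestronglyMeasurable (by fun_prop))]
  rw [hmean, hpush]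
  calc _ ≤ √(Var[f; ν] / Fintype.card ι) :=
        integral_abs_pi_average_sub_le_sqrt_variance_div
          (memLp_of_bounded hfν hf.aestronglyMeasurable 2)
    _ ≤ √((1 / 2) ^ 2 / Fintype.card ι) := by
        gcongr
        simpa using variance_le_sq_of_bounded hfν hf.aemeasurable
    _ = 1 / (2 * √(Fintype.card ι)) := by
        rw [Real.sqrt_div' _ (by positivity), Real.sqrt_sq (by norm_num)]
        ring

lemma integral_iSup_le_sum_integral {Ω ι : Type*} [MeasurableSpace Ω] {μ : Measure Ω}
    [Fintype ι] {g : ι → Ω → ℝ} (hg0 : ∀ i ω, 0 ≤ g i ω) (hg : ∀ i, Integrable (g i) μ) :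
    ∫ ω, ⨆ i, g i ω ∂μ ≤ ∑ i, ∫ ω, g i ω ∂μ := by
  rw [← integral_finsetSum _ fun i _ => hg i]
  refine integral_mono_of_nonneg (ae_of_all _ fun ω => Real.iSup_nonneg fun i => hg0 i ω)
    (integrable_finsetSum _ fun i _ => hg i) (ae_of_all _ fun ω => ?_)
  exact Real.iSup_le (fun i => Finset.single_le_sum (fun j _ => hg0 j ω) (Finset.mem_univ i))
    (Finset.sum_nonneg fun j _ => hg0 j ω)

lemma one_div_two_mul_sqrt_le_setIntegral_exp {t : ℝ} (ht : 1 / 4 ≤ t) :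
    1 / (2 * √t) ≤ ∫ x in Set.Icc (0 : ℝ) 1, 2 * Real.exp (-2 * t * x ^ 2) := by
  set c := 1 / (2 * √t)
  have hsqrt : 1 / 2 ≤ √t := Real.le_sqrt_of_sq_le (by linarith)
  have hc0 : 0 ≤ c := by positivity
  have hc1 : c ≤ 1 := by
    rw [div_le_one (by positivity)]
    linarith
  have htc : t * c ^ 2 = 1 / 4 := by
    rw [div_pow, mul_pow, Real.sq_sqrt (by linarith)]
    field_simp
    ring
  have hcont : Continuous fun x : ℝ => 2 * Real.exp (-2 * t * x ^ 2) := by fun_prop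
  calc c = ∫ _ in Set.Icc (0 : ℝ) c, (1 : ℝ) := by simp [hc0]
    _ ≤ ∫ x in Set.Icc (0 : ℝ) c, 2 * Real.exp (-2 * t * x ^ 2) := by
      refine setIntegral_mono_on (integrableOn_const (by simp)) hcont.integrableOn_Icc
        measurableSet_Icc fun x hx => ?_
      -- `exp y ≥ 1 + y` with `2 t x² ≤ 2 t c² = 1 / 2`
      have hx2 : t * x ^ 2 ≤ t * c ^ 2 :=
        mul_le_mul_of_nonneg_left (pow_le_pow_left₀ hx.1 hx.2 2) (by linarith)
      nlinarith [Real.add_one_le_exp (-2 * t * x ^ 2)]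
    _ ≤ ∫ x in Set.Icc (0 : ℝ) 1, 2 * Real.exp (-2 * t * x ^ 2) :=
      setIntegral_mono_set hcont.integrableOn_Icc (ae_of_all _ fun x => by positivity)
        (Set.Icc_subset_Icc le_rfl hc1).eventuallyLE

lemma tendsto_setIntegral_exp_neg_mul_sq :
    Tendsto (fun n : ℕ => ∫ x in Set.Icc (0 : ℝ) 1, Real.exp (-2 * n * x ^ 2)) atTop (𝓝 0) := by
  have hlim : ∀ x : ℝ, x ≠ 0 → Tendsto (fun n : ℕ => Real.exp (-2 * n * x ^ 2)) atTop (𝓝 0) := by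
    intro x hx
    refine Real.tendsto_exp_atBot.comp ?_
    have : Tendsto (fun n : ℕ => (n : ℝ) * (-2 * x ^ 2)) atTop atBot :=
      tendsto_natCast_atTop_atTop.atTop_mul_const_of_neg (by nlinarith [sq_pos_of_ne_zero hx])
    exact this.congr fun n => by ring
  simpa using tendsto_integral_of_dominated_convergence (fun _ => (1 : ℝ))
    (fun n => (by fun_prop : Continuous fun x : ℝ => Real.exp (-2 * n * x ^ 2)).aestronglyMeasurable)
    (integrable_const 1)
    (fun n => ae_of_all _ fun x => by
      rw [Real.norm_eq_abs, abs_of_pos (Real.exp_pos _), Real.exp_le_one_iff]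
      nlinarith [sq_nonneg x, (n.cast_nonneg : (0 : ℝ) ≤ n)])
    (ae_restrict_of_ae ((Measure.ae_ne volume 0).mono hlim))

theorem stmt14_general {Ω E : Type*} [MeasurableSpace Ω] [MeasurableSpace E]
    (μ : Measure Ω) [IsProbabilityMeasure μ]
    (q : ℕ) (hq : 0 < q) (X : Fin q → Ω → E) (hXmeas : ∀ j, Measurable (X j))
    (hiid : Measure.map (fun ω (j : Fin q) => X j ω) μ =
      Measure.pi fun _ : Fin q => Measure.map (X ⟨0, hq⟩) μ)
    (H : Finset (E → ℝ))
    (hHmeas : ∀ f ∈ H, Measurable f) (hH01 : ∀ f ∈ H, ∀ x, f x ∈ Set.Icc (0 : ℝ) 1) :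
    (∫ ω, ⨆ f : H, |(1 / (q : ℝ)) * ∑ j, f.1 (X j ω) - ∫ ω', f.1 (X ⟨0, hq⟩ ω') ∂μ| ∂μ ≤
        ∫ x in Set.Icc (0 : ℝ) 1, 2 * H.card * Real.exp (-2 * q * x ^ 2)) ∧
      Filter.Tendsto
        (fun q' : ℕ => ∫ x in Set.Icc (0 : ℝ) 1, 2 * H.card * Real.exp (-2 * q' * x ^ 2))
        Filter.atTop (nhds 0) := by
  refine ⟨?_, by simpa only [integral_const_mul, mul_zero] using
    tendsto_setIntegral_exp_neg_mul_sq.const_mul (2 * (H.card : ℝ))⟩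
  have hdev : ∀ f ∈ H,
      ∫ ω, |(1 / (q : ℝ)) * ∑ j, f (X j ω) - ∫ ω', f (X ⟨0, hq⟩ ω') ∂μ| ∂μ ≤ 1 / (2 * √q) :=
    fun f hf => by
      simpa using integral_abs_average_comp_sub_le hXmeas ⟨0, hq⟩ hiid (hHmeas f hf) (hH01 f hf)
  have hint : ∀ f ∈ H, Integrable
      (fun ω => |(1 / (q : ℝ)) * ∑ j, f (X j ω) - ∫ ω', f (X ⟨0, hq⟩ ω') ∂μ|) μ := fun f hf =>
    (((integrable_finsetSum _ fun j _ => Integrable.of_mem_Icc 0 1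
      ((hHmeas f hf).comp (hXmeas j)).aemeasurable (ae_of_all _ fun ω => hH01 f hf _)).const_mul
        _).sub (integrable_const _)).abs
  calc _ ≤ ∑ f : H, ∫ ω, |(1 / (q : ℝ)) * ∑ j, f.1 (X j ω) - ∫ ω', f.1 (X ⟨0, hq⟩ ω') ∂μ| ∂μ :=
        integral_iSup_le_sum_integral (fun _ _ => abs_nonneg _) fun f => hint f f.2
    _ ≤ ∑ _f : H, 1 / (2 * √q) := Finset.sum_le_sum fun f _ => hdev f f.2
    _ ≤ H.card * ∫ x in Set.Icc (0 : ℝ) 1, 2 * Real.exp (-2 * q * x ^ 2) := by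
        rw [Finset.sum_const, Finset.card_univ, Fintype.card_coe, nsmul_eq_mul]
        gcongr
        have hq1 : (1 : ℝ) ≤ q := by exact_mod_cast hq
        exact one_div_two_mul_sqrt_le_setIntegral_exp (by linarith)
    _ = ∫ x in Set.Icc (0 : ℝ) 1, 2 * H.card * Real.exp (-2 * q * x ^ 2) := by
        rw [← integral_const_mul]
        congr 1 with x
        ring

/-- Step in the proof of Lemma 2 of the paper: if `X₁, …, X_q` are i.i.d. `E`-valued random
variables and `H` is a nonempty finite set of measurable functions `E → [0,1]`, then
`E[max_{f ∈ H} |(1/q)·∑_j f(X_j) − E[f(X₁)]|] ≤ ∫₀¹ 2·|H|·exp(−2qx²) dx`; moreover the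
right-hand side (and hence the left-hand side) tends to `0` as `q → ∞`. -/
theorem stmt14 {Ω E : Type*} [MeasurableSpace Ω] [MeasurableSpace E]
    (μ : Measure Ω) [IsProbabilityMeasure μ]
    (q : ℕ) (hq : 0 < q) (X : Fin q → Ω → E) (hXmeas : ∀ j, Measurable (X j))
    (hiid : Measure.map (fun ω (j : Fin q) => X j ω) μ =
      Measure.pi fun _ : Fin q => Measure.map (X ⟨0, hq⟩) μ)
    (H : Finset (E → ℝ)) (hHne : H.Nonempty)
    (hHmeas : ∀ f ∈ H, Measurable f) (hH01 : ∀ f ∈ H, ∀ x, f x ∈ Set.Icc (0 : ℝ) 1) :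
    (∫ ω, ⨆ f : H, |(1 / (q : ℝ)) * ∑ j, f.1 (X j ω) - ∫ ω', f.1 (X ⟨0, hq⟩ ω') ∂μ| ∂μ ≤
        ∫ x in Set.Icc (0 : ℝ) 1, 2 * H.card * Real.exp (-2 * q * x ^ 2)) ∧
      Filter.Tendsto
        (fun q' : ℕ => ∫ x in Set.Icc (0 : ℝ) 1, 2 * H.card * Real.exp (-2 * q' * x ^ 2))
        Filter.atTop (nhds 0) :=
  stmt14_general μ q hq X hXmeas hiid H hHmeas hH01
end
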